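/- Let G be a finite group. Every minimum separating set of the power graph 𝒢(G) is of the form [x₁] ∪ ⋯ ∪ [x_s] for some elements x₁, …, x_s of G, where [x] denotes the set of generators of the cyclic subgroup ⟨x⟩. -/

import Mathlib

open Subgroup

/-- The power graph of a group: distinct `u`, `v` are adjacent iff one is a
positive integer power of the other. -/
def powerGraph (G : Type*) [Group G] : SimpleGraph G where
  Adj u v := u ≠ v ∧ ((∃ n : ℕ, 0 < n ∧ v = u ^ n) ∨ (∃ m : ℕ, 0 < m ∧ u = v ^ m))
  symm := ⟨fun u v h => ⟨h.1.symm, h.2.symm⟩⟩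
  loopless := ⟨fun u h => h.1 rfl⟩

/-- The degree of a vertex in a graph. -/
noncomputable def gDegree {V : Type*} (Γ : SimpleGraph V) (x : V) : ℕ :=
  (Γ.neighborSet x).ncard

/-- The minimum degree δ(Γ) of a graph. -/
noncomputable def gMinDegree {V : Type*} (Γ : SimpleGraph V) : ℕ :=
  sInf (Set.range (gDegree Γ))

/-- The edge-connectivity κ'(Γ): the least size of a set of edges whose deletion
disconnects the graph. -/
noncomputable def edgeConn {V : Type*} (Γ : SimpleGraph V) : ℕ :=
  sInf {k | ∃ s : Finset (Sym2 V), s.card = k ∧ ↑s ⊆ Γ.edgeSet ∧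
    ¬ (Γ.deleteEdges ↑s).Connected}

/-- The vertex connectivity κ(Γ): the least size of a set of vertices whose deletion
disconnects the graph or leaves at most one vertex. -/
noncomputable def vertConn {V : Type*} (Γ : SimpleGraph V) : ℕ :=
  sInf {k | ∃ S : Set V, S.Finite ∧ S.ncard = k ∧
    (¬ (Γ.induce Sᶜ).Preconnected ∨ Sᶜ.Subsingleton)}

/-- A nontrivial connected graph is minimally edge-connected if deleting any edge
drops the edge-connectivity by exactly one. -/
def MinimallyEdgeConnected {V : Type*} (Γ : SimpleGraph V) : Prop :=
  Nontrivial V ∧ Γ.Connected ∧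
    ∀ e ∈ Γ.edgeSet, edgeConn (Γ.deleteEdges {e}) = edgeConn Γ - 1

/-- A nontrivial connected graph is minimally connected if deleting any edge
drops the vertex connectivity by exactly one. -/
def MinimallyConnected {V : Type*} (Γ : SimpleGraph V) : Prop :=
  Nontrivial V ∧ Γ.Connected ∧
    ∀ e ∈ Γ.edgeSet, vertConn (Γ.deleteEdges {e}) = vertConn Γ - 1

/-- `S` is a separating set of `Γ` if deleting the vertices of `S` leaves a
disconnected graph. -/
def IsSeparatingSet {V : Type*} (Γ : SimpleGraph V) (S : Set V) : Prop :=
  ¬ (Γ.induce Sᶜ).Preconnected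

/-- `S` is a minimum separating set of `Γ`. -/
def IsMinSeparatingSet {V : Type*} (Γ : SimpleGraph V) (S : Set V) : Prop :=
  IsSeparatingSet Γ S ∧ ∀ T : Set V, IsSeparatingSet Γ T → S.ncard ≤ T.ncard

/-- `y` generates a maximal cyclic subgroup of `G`: the cyclic subgroup `⟨y⟩` is
not properly contained in any cyclic subgroup. -/
def IsMaxCyclicGen {G : Type*} [Group G] (y : G) : Prop :=
  ∀ z : G, zpowers y ≤ zpowers z → zpowers y = zpowers z

/-- A subgroup is maximal cyclic if it is cyclic and not properly contained in
any cyclic subgroup. -/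
def IsMaximalCyclicSubgroup {G : Type*} [Group G] (H : Subgroup G) : Prop :=
  (∃ y : G, H = zpowers y) ∧ ∀ z : G, H ≤ zpowers z → H = zpowers z

/-
If `⟨h⟩ = ⟨g⟩`, every neighbour of `g` in the power graph other than `h` is also a neighbour
of `h`. So if a separating set `S` contained `g` but not `h`, putting `g` back into the graph
would not reconnect it, because any path through `g` can be rerouted through `h`; then `S \ {g}`
would be a smaller separating set.
-/

namespace SimpleGraph

variable {V W : Type*} {Γ : SimpleGraph V} {Δ : SimpleGraph W}

lemma Preconnected.map_of_adj_reachable (f : V → W) (hf : Function.Surjective f)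
    (hadj : ∀ a b, Γ.Adj a b → Δ.Reachable (f a) (f b)) (h : Γ.Preconnected) :
    Δ.Preconnected := by
  intro u v
  obtain ⟨a, rfl⟩ := hf u
  obtain ⟨b, rfl⟩ := hf v
  simp only [reachable_iff_reflTransGen] at hadj ⊢
  exact Relation.ReflTransGen.lift' f hadj a b ((reachable_iff_reflTransGen a b).1 (h a b))

lemma preconnected_induce_of_dominated {S : Set V} {g h : V} (hg : g ∈ S) (hh : h ∉ S)
    (hdom : ∀ b, b ≠ h → Γ.Adj g b → Γ.Adj h b)
    (hpre : (Γ.induce (S \ {g})ᶜ).Preconnected) : (Γ.induce Sᶜ).Preconnected := by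
  classical
  let φ : V → V := fun a => if a = g then h else a
  have hφ_of_ne {a : V} (hag : a ≠ g) : φ a = a := if_neg hag
  have hφ (a : ↥(S \ {g})ᶜ) : φ a ∉ S := by
    by_cases hag : (a : V) = g
    · simpa [φ, hag] using hh
    · rw [hφ_of_ne hag]; exact fun ha => a.2 ⟨ha, hag⟩
  have hφ_adj_left {b : V} (hgb : Γ.Adj g b) : φ g = φ b ∨ Γ.Adj (φ g) (φ b) := by
    rw [hφ_of_ne hgb.ne.symm, show φ g = h from if_pos rfl]
    exact (eq_or_ne b h).imp Eq.symm (hdom b · hgb)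
  have hφ_adj {a b : V} (hab : Γ.Adj a b) : φ a = φ b ∨ Γ.Adj (φ a) (φ b) := by
    by_cases hag : a = g
    · subst hag
      exact hφ_adj_left hab
    by_cases hbg : b = g
    · subst hbg
      exact (hφ_adj_left hab.symm).imp Eq.symm Adj.symm
    rw [hφ_of_ne hag, hφ_of_ne hbg]
    exact .inr hab
  refine hpre.map_of_adj_reachable (fun a : ↥(S \ {g})ᶜ => (⟨φ a, hφ a⟩ : ↥Sᶜ))
    (fun a => ?_) fun a b hab => ?_
  · have hag : (a : V) ≠ g := fun e => a.2 (e ▸ hg)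
    exact ⟨⟨a, fun ha => a.2 ha.1⟩, Subtype.ext (hφ_of_ne hag)⟩
  · rcases hφ_adj (a := a) (b := b) hab with heq | hadj
    · exact (Subtype.ext heq : (⟨φ a, hφ a⟩ : ↥Sᶜ) = ⟨φ b, hφ b⟩) ▸ Reachable.refl _
    · exact Adj.reachable hadj

end SimpleGraph

section

variable {V : Type*} {Γ : SimpleGraph V} {S : Set V} {g h : V}

lemma IsSeparatingSet.diff_singleton_of_dominated (hS : IsSeparatingSet Γ S) (hg : g ∈ S)
    (hh : h ∉ S) (hdom : ∀ b, b ≠ h → Γ.Adj g b → Γ.Adj h b) :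
    IsSeparatingSet Γ (S \ {g}) :=
  fun hpre => hS (SimpleGraph.preconnected_induce_of_dominated hg hh hdom hpre)

lemma IsMinSeparatingSet.mem_of_dominated (hS : IsMinSeparatingSet Γ S) (hfin : S.Finite)
    (hg : g ∈ S) (hdom : ∀ b, b ≠ h → Γ.Adj g b → Γ.Adj h b) : h ∈ S := by
  by_contra hh
  exact (hS.2 _ (hS.1.diff_singleton_of_dominated hg hh hdom)).not_gt
    (Set.ncard_sdiff_singleton_lt_of_mem hg hfin)

end

lemma IsOfFinOrder.mem_zpowers_iff_exists_pos_pow {G : Type*} [Group G] {x y : G}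
    (hx : IsOfFinOrder x) : y ∈ zpowers x ↔ ∃ n : ℕ, 0 < n ∧ y = x ^ n := by
  refine ⟨fun hy => ?_, fun ⟨n, _, hy⟩ => hy ▸ npow_mem_zpowers x n⟩
  obtain ⟨_ | n, rfl⟩ := (hx.mem_powers_iff_mem_zpowers).2 hy
  · exact ⟨orderOf x, hx.orderOf_pos, by simp [pow_orderOf_eq_one]⟩
  · exact ⟨n + 1, n.succ_pos, rfl⟩

lemma powerGraph_adj_iff {G : Type*} [Group G] [Finite G] {u v : G} :
    (powerGraph G).Adj u v ↔ u ≠ v ∧ (v ∈ zpowers u ∨ u ∈ zpowers v) := by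
  rw [(isOfFinOrder_of_finite u).mem_zpowers_iff_exists_pos_pow,
    (isOfFinOrder_of_finite v).mem_zpowers_iff_exists_pos_pow]
  rfl

lemma powerGraph_adj_of_zpowers_eq {G : Type*} [Group G] [Finite G] {g h b : G}
    (hgh : zpowers h = zpowers g) (hbh : b ≠ h) (hgb : (powerGraph G).Adj g b) :
    (powerGraph G).Adj h b := by
  rw [powerGraph_adj_iff] at hgb ⊢
  refine ⟨hbh.symm, hgb.2.imp (hgh ▸ ·) fun hg => ?_⟩
  rw [← zpowers_le, hgh, zpowers_le]
  exact hg

/-- Every minimum separating set of the power graph of a finite group is a union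
of sets of generators `[x] = {g | ⟨g⟩ = ⟨x⟩}` of cyclic subgroups. -/
theorem stmt_8 (G : Type*) [Group G] [Fintype G] (S : Set G)
    (hS : IsMinSeparatingSet (powerGraph G) S) :
    ∃ T : Finset G, S = ⋃ x ∈ T, {g : G | zpowers g = zpowers x} := by
  refine ⟨S.toFinite.toFinset, Set.ext fun a => ?_⟩
  simp only [Set.mem_iUnion, Set.Finite.mem_toFinset, Set.mem_ofPred_eq, exists_prop]
  exact ⟨fun ha => ⟨a, ha, rfl⟩, fun ⟨x, hx, hax⟩ =>
    hS.mem_of_dominated S.toFinite hx fun _ hbh => powerGraph_adj_of_zpowers_eq hax hbh⟩
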